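/- arXiv:math/0404466 — 2 statements merged into one kernel-verified Lean document; each statement's English description precedes it below -/
import Mathlib

section
/- For any directed graph Q, the adjoint operator algebra OA(Q)* is completely isometrically isomorphic to OA(Q^←), the universal operator algebra of the adjoint graph of Q. -/
noncomputable section

open scoped Classical

/-! ## Operator algebras, concretely represented -/

/-- A (concrete) operator algebra: a norm-closed subalgebra of the bounded
operators on a complex Hilbert space. -/
structure OpAlg where
  H : Type
  [nacg : NormedAddCommGroup H]
  [ips : InnerProductSpace ℂ H]
  [cs : CompleteSpace H]
  carrier : NonUnitalSubalgebra ℂ (H →L[ℂ] H)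
  isClosed : IsClosed (carrier : Set (H →L[ℂ] H))

attribute [instance] OpAlg.nacg OpAlg.ips OpAlg.cs

/-- The amplification of an `n × n` matrix of operators on `H` to an operator on
`H ⊕₂ ⋯ ⊕₂ H` (`n` summands, with the Hilbert space norm). -/
def matAmp {H : Type} [NormedAddCommGroup H] [InnerProductSpace ℂ H]
    {n : ℕ} (a : Matrix (Fin n) (Fin n) (H →L[ℂ] H)) :
    (PiLp 2 fun _ : Fin n => H) →L[ℂ] (PiLp 2 fun _ : Fin n => H) :=
  ((PiLp.continuousLinearEquiv 2 ℂ fun _ : Fin n => H).symm.toContinuousLinearMap.comp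
    (ContinuousLinearMap.pi fun i => ∑ j, (a i j).comp (ContinuousLinearMap.proj j))).comp
    (PiLp.continuousLinearEquiv 2 ℂ fun _ : Fin n => H).toContinuousLinearMap

/-- The matrix norm of a matrix over a concrete operator algebra. -/
def matNorm (A : OpAlg) {n : ℕ} (a : Matrix (Fin n) (Fin n) A.carrier) : ℝ :=
  ‖matAmp fun i j => (a i j : A.H →L[ℂ] A.H)‖

/-- A completely contractive homomorphism of operator algebras. -/
structure CCHom (A B : OpAlg) where
  toHom : A.carrier →ₙₐ[ℂ] B.carrier
  completelyContractive : ∀ (n : ℕ) (a : Matrix (Fin n) (Fin n) A.carrier),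
    matNorm B (fun i j => toHom (a i j)) ≤ matNorm A a

/-- A completely isometric homomorphism. -/
def CCHom.CompletelyIsometric {A B : OpAlg} (φ : CCHom A B) : Prop :=
  ∀ (n : ℕ) (a : Matrix (Fin n) (Fin n) A.carrier),
    matNorm B (fun i j => φ.toHom (a i j)) = matNorm A a

/-- Two operator algebras are completely isometrically isomorphic if there is a
bijective completely isometric homomorphism between them. -/
def CIIso (A B : OpAlg) : Prop :=
  ∃ φ : CCHom A B, Function.Bijective φ.toHom ∧ φ.CompletelyIsometric

/-! ## Directed graphs -/

/-- A directed graph: vertices, edges, and source and range maps. -/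
structure DiGraph where
  V : Type
  E : Type
  s : E → V
  r : E → V

/-- A contractive representation of a directed graph in an operator algebra:
vertices go to (self-adjoint) projections, edges go to contractions, compatibly
with the range and source maps. -/
structure GraphRep (Q : DiGraph) (A : OpAlg) where
  v : Q.V → A.carrier
  e : Q.E → A.carrier
  idem : ∀ x, v x * v x = v x
  selfAdjoint : ∀ x, IsSelfAdjoint (v x : A.H →L[ℂ] A.H)
  contractive : ∀ x, ‖(e x : A.H →L[ℂ] A.H)‖ ≤ 1
  range_mul : ∀ x, v (Q.r x) * e x = e x
  mul_source : ∀ x, e x * v (Q.s x) = e x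

/-- The representation generates the operator algebra. -/
def GraphRep.Generates {Q : DiGraph} {A : OpAlg} (ρ : GraphRep Q A) : Prop :=
  closure ((NonUnitalAlgebra.adjoin ℂ (Set.range ρ.v ∪ Set.range ρ.e) :
    NonUnitalSubalgebra ℂ A.carrier) : Set A.carrier) = Set.univ

/-- A homomorphism extends (intertwines) two representations of the same graph. -/
def ExtendsRep {Q : DiGraph} {A B : OpAlg} (ψ : CCHom A B)
    (ρ : GraphRep Q A) (σ : GraphRep Q B) : Prop :=
  (∀ x, ψ.toHom (ρ.v x) = σ.v x) ∧ (∀ x, ψ.toHom (ρ.e x) = σ.e x)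

/-- `(A, ι)` is *the* universal operator algebra of the directed graph `Q`:
`ι` generates, and every contractive representation of `Q` factors uniquely
through a completely contractive homomorphism. -/
def IsUniversalOA (Q : DiGraph) (A : OpAlg) (ι : GraphRep Q A) : Prop :=
  ι.Generates ∧
    ∀ (B : OpAlg) (σ : GraphRep Q B), ∃! ψ : CCHom A B, ExtendsRep ψ ι σ


/-! ## Statement 7 specific definitions -/

/-- The adjoint (opposite) graph: all edges reversed. -/
def DiGraph.adj (Q : DiGraph) : DiGraph := ⟨Q.V, Q.E, Q.r, Q.s⟩

/-- The adjoint of a concrete operator algebra: the algebra `A* = {a* : a ∈ A}`,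
acting on the same Hilbert space. -/
def OpAlg.adj (A : OpAlg) : OpAlg where
  H := A.H
  carrier :=
    { carrier := star '' (A.carrier : Set (A.H →L[ℂ] A.H))
      add_mem' := by
        rintro a b ⟨x, hx, rfl⟩ ⟨y, hy, rfl⟩
        exact ⟨x + y, A.carrier.add_mem hx hy, star_add x y⟩
      zero_mem' := ⟨0, A.carrier.zero_mem, star_zero _⟩
      mul_mem' := by
        rintro a b ⟨x, hx, rfl⟩ ⟨y, hy, rfl⟩
        exact ⟨y * x, A.carrier.mul_mem hy hx, star_mul y x⟩
      smul_mem' := by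
        rintro c a ⟨x, hx, rfl⟩
        exact ⟨(starRingEnd ℂ) c • x, A.carrier.smul_mem _ hx, by
          rw [star_smul, starRingEnd_apply, star_star]⟩ }
  isClosed := by
    have h : star '' (A.carrier : Set (A.H →L[ℂ] A.H)) =
        star ⁻¹' (A.carrier : Set (A.H →L[ℂ] A.H)) := by
      ext x
      constructor
      · rintro ⟨y, hy, rfl⟩; simpa [star_star] using hy
      · intro hx; exact ⟨star x, hx, star_star x⟩
    show IsClosed (star '' (A.carrier : Set (A.H →L[ℂ] A.H)))
    rw [h]
    exact A.isClosed.preimage continuous_star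


/-! ## Auxiliary lemmas for Statement 7 -/

section Aux

set_option maxHeartbeats 1000000 in
instance piLpComplete {H : Type} [NormedAddCommGroup H] [InnerProductSpace ℂ H]
    [CompleteSpace H] {n : ℕ} : CompleteSpace (PiLp 2 fun _ : Fin n => H) :=
  inferInstance

variable {H : Type} [NormedAddCommGroup H] [InnerProductSpace ℂ H] [CompleteSpace H] {n : ℕ}

set_option linter.unusedSectionVars false

lemma matAmp_apply (a : Matrix (Fin n) (Fin n) (H →L[ℂ] H)) (v : PiLp 2 fun _ : Fin n => H)
    (i : Fin n) : matAmp a v i = ∑ j, a i j (v j) := by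
  simp [matAmp]

lemma matAmp_star (a : Matrix (Fin n) (Fin n) (H →L[ℂ] H)) :
    matAmp (fun i j => star (a j i)) = ContinuousLinearMap.adjoint (matAmp a) := by
  rw [ContinuousLinearMap.eq_adjoint_iff]
  intro x y
  simp only [PiLp.inner_apply, matAmp_apply, sum_inner, inner_sum]
  rw [Finset.sum_comm]
  erw [Finset.sum_congr rfl (fun i _ => by rw [matAmp_apply (fun i j => star (a j i)) x i])]
  simp only [sum_inner]
  congr 1; ext i; congr 1; ext j
  simp [ContinuousLinearMap.star_eq_adjoint, ContinuousLinearMap.adjoint_inner_left]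

lemma matAmp_star_norm (a : Matrix (Fin n) (Fin n) (H →L[ℂ] H)) :
    ‖matAmp (fun i j => star (a j i))‖ = ‖matAmp a‖ := by
  rw [matAmp_star]
  exact LinearIsometryEquiv.norm_map ContinuousLinearMap.adjoint _

end Aux

namespace OpAlg

lemma star_mem_of_adj (A : OpAlg) {x : A.H →L[ℂ] A.H} (hx : x ∈ A.adj.carrier) :
    star x ∈ A.carrier := by
  obtain ⟨y, hy, rfl⟩ := hx
  simpa [star_star] using hy

/-- The element `star a` of `A.adj`, for `a : A`. -/
def starElem (A : OpAlg) (a : A.carrier) : A.adj.carrier :=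
  ⟨star a.1, a.1, a.2, rfl⟩

/-- The element `star x` of `A`, for `x : A.adj`. -/
def unstarElem (A : OpAlg) (x : A.adj.carrier) : A.carrier :=
  ⟨star x.1, A.star_mem_of_adj x.2⟩

@[simp] lemma starElem_val (A : OpAlg) (a : A.carrier) : (A.starElem a).1 = star a.1 := rfl

@[simp] lemma unstarElem_val (A : OpAlg) (x : A.adj.carrier) :
    (A.unstarElem x).1 = star x.1 := rfl

@[simp] lemma unstar_star (A : OpAlg) (a : A.carrier) : A.unstarElem (A.starElem a) = a :=
  Subtype.ext (star_star _)

@[simp] lemma star_unstar (A : OpAlg) (x : A.adj.carrier) : A.starElem (A.unstarElem x) = x :=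
  Subtype.ext (star_star _)

end OpAlg

set_option maxHeartbeats 1000000 in
/-- Transposed matrices of starred elements have the same matrix norm. -/
lemma matNorm_unstar (A : OpAlg) {n : ℕ} (x : Matrix (Fin n) (Fin n) A.adj.carrier) :
    matNorm A (fun i j => A.unstarElem (x j i)) = matNorm A.adj x := by
  unfold matNorm
  exact matAmp_star_norm (fun i j => (x i j).1)

set_option maxHeartbeats 1000000 in
/-- The star representation of the adjoint graph in the adjoint algebra. -/
def starRep {Q : DiGraph} {A : OpAlg} (rho : GraphRep Q A) : GraphRep Q.adj A.adj where
  v x := A.starElem (rho.v x)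
  e x := A.starElem (rho.e x)
  idem x := Subtype.ext <| by
    have h := congrArg Subtype.val (rho.idem x)
    show star (rho.v x).1 * star (rho.v x).1 = star (rho.v x).1
    rw [← star_mul]
    exact congrArg star h
  selfAdjoint x := by
    have h := rho.selfAdjoint x
    show IsSelfAdjoint (star ((rho.v x : A.H →L[ℂ] A.H)))
    rw [h.star_eq]
    exact h
  contractive x := by
    show ‖star ((rho.e x : A.H →L[ℂ] A.H))‖ ≤ 1
    rw [norm_star]
    exact rho.contractive x
  range_mul x := Subtype.ext <| by
    have h := congrArg Subtype.val (rho.mul_source x)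
    show star (rho.v (Q.s x)).1 * star (rho.e x).1 = star (rho.e x).1
    rw [← star_mul]
    exact congrArg star h
  mul_source x := Subtype.ext <| by
    have h := congrArg Subtype.val (rho.range_mul x)
    show star (rho.e x).1 * star (rho.v (Q.r x)).1 = star (rho.e x).1
    rw [← star_mul]
    exact congrArg star h

/-- The identity completely contractive homomorphism. -/
def CCHom.idHom (A : OpAlg) : CCHom A A where
  toHom := NonUnitalAlgHom.id ℂ A.carrier
  completelyContractive _ _ := le_of_eq rfl

/-- Composition of completely contractive homomorphisms. -/
def CCHom.comp {A B C : OpAlg} (g : CCHom B C) (f : CCHom A B) : CCHom A C where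
  toHom := g.toHom.comp f.toHom
  completelyContractive n a :=
    le_trans (g.completelyContractive n fun i j => f.toHom (a i j))
      (f.completelyContractive n a)

set_option maxHeartbeats 1000000 in
/-- Conjugating a completely contractive homomorphism `X → Y*` by the star operation
yields a completely contractive homomorphism `X* → Y`. -/
def unstarHom {X Y : OpAlg} (phi : CCHom X Y.adj) : CCHom X.adj Y where
  toHom :=
    { toFun := fun x => Y.unstarElem (phi.toHom (X.unstarElem x))
      map_smul' := fun c x => by
        show Y.unstarElem (phi.toHom (X.unstarElem (c • x)))
          = c • Y.unstarElem (phi.toHom (X.unstarElem x))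
        have h1 : X.unstarElem (c • x) = (starRingEnd ℂ) c • X.unstarElem x :=
          Subtype.ext (by simp [star_smul, Complex.star_def]; rfl)
        rw [h1, map_smul]
        exact Subtype.ext (by simp [star_smul, Complex.star_def]; rfl)
      map_zero' := by
        show Y.unstarElem (phi.toHom (X.unstarElem 0)) = 0
        have h1 : X.unstarElem 0 = 0 := Subtype.ext (by simp; rfl)
        rw [h1, map_zero]
        exact Subtype.ext (by simp; rfl)
      map_add' := fun x y => by
        show Y.unstarElem (phi.toHom (X.unstarElem (x + y)))
          = Y.unstarElem (phi.toHom (X.unstarElem x)) + Y.unstarElem (phi.toHom (X.unstarElem y))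
        have h1 : X.unstarElem (x + y) = X.unstarElem x + X.unstarElem y :=
          Subtype.ext (by simp; rfl)
        rw [h1, map_add]
        exact Subtype.ext (by simp; rfl)
      map_mul' := fun x y => by
        show Y.unstarElem (phi.toHom (X.unstarElem (x * y)))
          = Y.unstarElem (phi.toHom (X.unstarElem x)) * Y.unstarElem (phi.toHom (X.unstarElem y))
        have h1 : X.unstarElem (x * y) = X.unstarElem y * X.unstarElem x :=
          Subtype.ext (by simp [star_mul]; rfl)
        rw [h1, map_mul]
        exact Subtype.ext (by simp [star_mul]; rfl) }
  completelyContractive n a := by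
    calc matNorm Y (fun i j => Y.unstarElem (phi.toHom (X.unstarElem (a i j))))
        = matNorm Y.adj (fun i j => phi.toHom (X.unstarElem (a j i))) :=
          matNorm_unstar Y (fun i j => phi.toHom (X.unstarElem (a j i)))
      _ ≤ matNorm X (fun i j => X.unstarElem (a j i)) :=
          phi.completelyContractive n (fun i j => X.unstarElem (a j i))
      _ = matNorm X.adj a := matNorm_unstar X a

/-- For any directed graph `Q`, the adjoint operator algebra `OA(Q)*`
is completely isometrically isomorphic to `OA(Q^←)`, the universal operator algebra of
the adjoint graph. -/
theorem adjoint_universalOA :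
    ∀ (Q : DiGraph) (A : OpAlg) (ι : GraphRep Q A), IsUniversalOA Q A ι →
    ∀ (B : OpAlg) (κ : GraphRep Q.adj B), IsUniversalOA Q.adj B κ →
      CIIso (OpAlg.adj A) B := by
  intro Q A iota hA B kappa hB
  obtain ⟨psi, hpsi, -⟩ := hB.2 A.adj (starRep iota)
  obtain ⟨phi, hphi, -⟩ := hA.2 B.adj (starRep kappa)
  -- (unstarHom phi) ∘ psi = id on B, by uniqueness of the extension of kappa
  have hcompB : ExtendsRep ((unstarHom phi).comp psi) kappa kappa := by
    constructor
    · intro x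
      show (unstarHom phi).toHom (psi.toHom (kappa.v x)) = kappa.v x
      rw [hpsi.1 x]
      show B.unstarElem (phi.toHom (A.unstarElem (A.starElem (iota.v x)))) = kappa.v x
      rw [A.unstar_star, hphi.1 x]
      exact B.unstar_star _
    · intro x
      show (unstarHom phi).toHom (psi.toHom (kappa.e x)) = kappa.e x
      rw [hpsi.2 x]
      show B.unstarElem (phi.toHom (A.unstarElem (A.starElem (iota.e x)))) = kappa.e x
      rw [A.unstar_star, hphi.2 x]
      exact B.unstar_star _
  have hidB : ExtendsRep (CCHom.idHom B) kappa kappa := ⟨fun _ => rfl, fun _ => rfl⟩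
  have hBeq : (unstarHom phi).comp psi = CCHom.idHom B :=
    (hB.2 B kappa).unique hcompB hidB
  have hBid : ∀ b, (unstarHom phi).toHom (psi.toHom b) = b := fun b =>
    congrArg (fun p : CCHom B B => p.toHom b) hBeq
  -- (unstarHom psi) ∘ phi = id on A, by uniqueness of the extension of iota
  have hcompA : ExtendsRep ((unstarHom psi).comp phi) iota iota := by
    constructor
    · intro x
      show (unstarHom psi).toHom (phi.toHom (iota.v x)) = iota.v x
      rw [hphi.1 x]
      show A.unstarElem (psi.toHom (B.unstarElem (B.starElem (kappa.v x)))) = iota.v x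
      rw [B.unstar_star, hpsi.1 x]
      exact A.unstar_star _
    · intro x
      show (unstarHom psi).toHom (phi.toHom (iota.e x)) = iota.e x
      rw [hphi.2 x]
      show A.unstarElem (psi.toHom (B.unstarElem (B.starElem (kappa.e x)))) = iota.e x
      rw [B.unstar_star, hpsi.2 x]
      exact A.unstar_star _
  have hidA : ExtendsRep (CCHom.idHom A) iota iota := ⟨fun _ => rfl, fun _ => rfl⟩
  have hAeq : (unstarHom psi).comp phi = CCHom.idHom A :=
    (hA.2 A iota).unique hcompA hidA
  have hAid : ∀ a, A.unstarElem (psi.toHom (B.unstarElem (phi.toHom a))) = a := fun a =>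
    congrArg (fun p : CCHom A A => p.toHom a) hAeq
  have hleft : ∀ x : A.adj.carrier, psi.toHom ((unstarHom phi).toHom x) = x := by
    intro x
    have h := congrArg A.starElem (hAid (A.unstarElem x))
    rw [A.star_unstar, A.star_unstar] at h
    calc psi.toHom ((unstarHom phi).toHom x)
        = psi.toHom (B.unstarElem (phi.toHom (A.unstarElem x))) := rfl
      _ = x := h
  refine ⟨unstarHom phi, ?_, ?_⟩
  · exact Function.bijective_iff_has_inverse.mpr ⟨psi.toHom, hleft, hBid⟩
  · intro n a
    apply le_antisymm ((unstarHom phi).completelyContractive n a)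
    have hmat : (fun i j => psi.toHom ((unstarHom phi).toHom (a i j))) = a := by
      funext i j; exact hleft (a i j)
    calc matNorm A.adj a
        = matNorm A.adj (fun i j => psi.toHom ((unstarHom phi).toHom (a i j))) := by rw [hmat]
      _ ≤ matNorm B (fun i j => (unstarHom phi).toHom (a i j)) :=
          psi.completelyContractive n (fun i j => (unstarHom phi).toHom (a i j))


end
end

section
/- Let Q be a directed graph and let W be any collection of subgraphs of Q, directed by inclusion, whose vertex sets cover V(Q) and whose edge sets cover E(Q). Then GC*_m(Q) is the inductive limit of the C*-algebras GC*_m(F) for F ∈ W. -/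
/-!
A `*`-homomorphism out of a universal graph C*-algebra is determined by the `*`-representation
it induces, so a compatible family of `*`-homomorphisms `GC*ₘ(F) → B` is the same as a family of
contractive `*`-representations of the subgraphs `F` in `B` that agree on overlaps (overlaps sit
inside a common member of the directed family `W`). Since `W` covers `Q` and every relation of
`Q` involves a single edge and its two endpoints, such a family glues to one `*`-representation
of `Q`, and the universal property of `GC*ₘ(Q)` gives the unique factorisation.
-/

noncomputable section

open scoped Classical

/-! ## C*-algebra framework -/

/-- A concrete C*-algebra: a norm-closed star-subalgebra of the bounded operators on
a complex Hilbert space. -/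
structure ConcCStar where
  H : Type
  [nacg : NormedAddCommGroup H]
  [ips : InnerProductSpace ℂ H]
  [cs : CompleteSpace H]
  carrier : NonUnitalStarSubalgebra ℂ (H →L[ℂ] H)
  isClosed : IsClosed (carrier : Set (H →L[ℂ] H))

attribute [instance] ConcCStar.nacg ConcCStar.ips ConcCStar.cs

/-- The underlying operator algebra of a concrete C*-algebra. -/
def ConcCStar.toOpAlg (C : ConcCStar) : OpAlg :=
  ⟨C.H, C.carrier.toNonUnitalSubalgebra, C.isClosed⟩

/-- A `*`-homomorphism between concrete C*-algebras. -/
abbrev StarHom (C D : ConcCStar) := C.carrier →⋆ₙₐ[ℂ] D.carrier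

/-- The doubled graph `Q *_{V(Q)} Q^←`: the free product of `Q` and its adjoint graph
amalgamated over the common vertex set. -/
def DiGraph.doubled (Q : DiGraph) : DiGraph :=
  ⟨Q.V, Q.E ⊕ Q.E, Sum.elim Q.s Q.r, Sum.elim Q.r Q.s⟩

/-- A contractive `*`-representation of `Q` in a C*-algebra: a contractive
representation of `Q *_{V(Q)} Q^←` such that the two copies of each edge are mapped
to mutually adjoint elements. -/
structure StarRep (Q : DiGraph) (C : ConcCStar) where
  toRep : GraphRep Q.doubled C.toOpAlg
  star_eq : ∀ x : Q.E,
    star ((toRep.e (Sum.inl x)).val) = (toRep.e (Sum.inr x)).val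

/-- A `*`-homomorphism extends (intertwines) two `*`-representations of the same graph. -/
def StarExtendsRep {Q : DiGraph} {C D : ConcCStar} (ψ : StarHom C D)
    (ρ : StarRep Q C) (σ : StarRep Q D) : Prop :=
  (∀ x, (ψ ⟨(ρ.toRep.v x).val, (ρ.toRep.v x).property⟩).val = (σ.toRep.v x).val) ∧
  (∀ x, (ψ ⟨(ρ.toRep.e x).val, (ρ.toRep.e x).property⟩).val = (σ.toRep.e x).val)

/-- `(C, ι)` is *the* universal C*-algebra `GC*ₘ(Q)` of the directed graph `Q`:
`ι` generates `C` as a C*-algebra, and every contractive `*`-representation of `Q`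
factors uniquely through a `*`-homomorphism. -/
def IsUniversalGCm (Q : DiGraph) (C : ConcCStar) (ι : StarRep Q C) : Prop :=
  closure ((NonUnitalStarAlgebra.adjoin ℂ
      (Set.range ι.toRep.v ∪ Set.range ι.toRep.e) :
    NonUnitalStarSubalgebra ℂ C.carrier) : Set C.carrier) = Set.univ ∧
  ∀ (D : ConcCStar) (σ : StarRep Q D), ∃! ψ : StarHom C D, StarExtendsRep ψ ι σ

/-- Reinterpret an element of the underlying operator algebra of a concrete C*-algebra. -/
def ConcCStar.el {C : ConcCStar} (x : C.toOpAlg.carrier) : C.carrier :=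
  ⟨x.val, x.property⟩

/-- `(C, ρ)` is the maximal C*-algebra `C*ₘ(A)` of the operator algebra `A`: `ρ` is a
completely isometric homomorphism onto a C*-generating copy of `A`, and every completely
contractive homomorphism of `A` into a C*-algebra factors uniquely through a
`*`-homomorphism of `C`. -/
def IsMaxCStar (A : OpAlg) (C : ConcCStar) (ρ : CCHom A C.toOpAlg) : Prop :=
  ρ.CompletelyIsometric ∧
  closure ((NonUnitalStarAlgebra.adjoin ℂ
      (Set.range fun a => ConcCStar.el (ρ.toHom a)) :
    NonUnitalStarSubalgebra ℂ C.carrier) : Set C.carrier) = Set.univ ∧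
  ∀ (D : ConcCStar) (φ : CCHom A D.toOpAlg),
    ∃! ψ : StarHom C D, ∀ a, (ψ (ConcCStar.el (ρ.toHom a))).val = (φ.toHom a).val

/-! ## Statement 14 specific definitions -/

/-- A homomorphism of directed graphs. -/
structure GraphHom (Q R : DiGraph) where
  vMap : Q.V → R.V
  eMap : Q.E → R.E
  s_eq : ∀ e, R.s (eMap e) = vMap (Q.s e)
  r_eq : ∀ e, R.r (eMap e) = vMap (Q.r e)

/-- A subgraph of a directed graph. -/
structure Subgraph (Q : DiGraph) where
  VS : Set Q.V
  ES : Set Q.E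
  src_mem : ∀ e ∈ ES, Q.s e ∈ VS
  rng_mem : ∀ e ∈ ES, Q.r e ∈ VS

/-- The directed graph underlying a subgraph. -/
def Subgraph.toGraph {Q : DiGraph} (F : Subgraph Q) : DiGraph :=
  ⟨F.VS, F.ES, fun e => ⟨Q.s e.1, F.src_mem e.1 e.2⟩, fun e => ⟨Q.r e.1, F.rng_mem e.1 e.2⟩⟩

instance (Q : DiGraph) : Preorder (Subgraph Q) where
  le F G := F.VS ⊆ G.VS ∧ F.ES ⊆ G.ES
  le_refl F := ⟨subset_rfl, subset_rfl⟩
  le_trans F G K h h' := ⟨h.1.trans h'.1, h.2.trans h'.2⟩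

/-- The inclusion of a subgraph into a larger subgraph, as a graph homomorphism. -/
def Subgraph.incl {Q : DiGraph} {F G : Subgraph Q} (h : F ≤ G) :
    GraphHom F.toGraph G.toGraph :=
  ⟨fun v => ⟨v.1, h.1 v.2⟩, fun e => ⟨e.1, h.2 e.2⟩, fun _ => rfl, fun _ => rfl⟩

/-- The inclusion of a subgraph into the whole graph, as a graph homomorphism. -/
def Subgraph.inclTop {Q : DiGraph} (F : Subgraph Q) : GraphHom F.toGraph Q :=
  ⟨Subtype.val, Subtype.val, fun _ => rfl, fun _ => rfl⟩

/-- A `*`-homomorphism between universal graph C*-algebras extends a graph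
homomorphism of the underlying graphs, on the canonical generators. -/
def StarExtendsAlong {Q R : DiGraph} {C D : ConcCStar} (ψ : StarHom C D)
    (ρ : StarRep Q C) (σ : StarRep R D) (k : GraphHom Q R) : Prop :=
  (∀ x, (ψ (ConcCStar.el (ρ.toRep.v x))).val = (σ.toRep.v (k.vMap x)).val) ∧
  (∀ x, (ψ (ConcCStar.el (ρ.toRep.e (Sum.inl x)))).val
      = (σ.toRep.e (Sum.inl (k.eMap x))).val) ∧
  (∀ x, (ψ (ConcCStar.el (ρ.toRep.e (Sum.inr x)))).val
      = (σ.toRep.e (Sum.inr (k.eMap x))).val)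

def GraphHom.doubled {Q R : DiGraph} (k : GraphHom Q R) : GraphHom Q.doubled R.doubled where
  vMap := k.vMap
  eMap := Sum.map k.eMap k.eMap
  s_eq := by
    rintro (e | e)
    · exact k.s_eq e
    · exact k.r_eq e
  r_eq := by
    rintro (e | e)
    · exact k.r_eq e
    · exact k.s_eq e

def GraphRep.pullback {Q R : DiGraph} {A : OpAlg} (k : GraphHom Q R) (ρ : GraphRep R A) :
    GraphRep Q A where
  v x := ρ.v (k.vMap x)
  e x := ρ.e (k.eMap x)
  idem x := ρ.idem _
  selfAdjoint x := ρ.selfAdjoint _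
  contractive x := ρ.contractive _
  range_mul x := by
    show ρ.v (k.vMap (Q.r x)) * ρ.e (k.eMap x) = ρ.e (k.eMap x)
    rw [← k.r_eq]
    exact ρ.range_mul _
  mul_source x := by
    show ρ.e (k.eMap x) * ρ.v (k.vMap (Q.s x)) = ρ.e (k.eMap x)
    rw [← k.s_eq]
    exact ρ.mul_source _

def StarRep.pullback {Q R : DiGraph} {C : ConcCStar} (k : GraphHom Q R) (ρ : StarRep R C) :
    StarRep Q C where
  toRep := ρ.toRep.pullback k.doubled
  star_eq x := ρ.star_eq (k.eMap x)

instance ConcCStar.instNonUnitalCStarAlgebra (C : ConcCStar) :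
    NonUnitalCStarAlgebra C.carrier :=
  haveI := C.isClosed
  inferInstance

theorem ConcCStar.el_mul {C : ConcCStar} (x y : C.toOpAlg.carrier) :
    ConcCStar.el (x * y) = ConcCStar.el x * ConcCStar.el y := rfl

def ConcCStar.ofCarrier {C : ConcCStar} (x : C.carrier) : C.toOpAlg.carrier :=
  ⟨x.val, x.property⟩

theorem ConcCStar.ofCarrier_mul {C : ConcCStar} (x y : C.carrier) :
    ConcCStar.ofCarrier (x * y) = ConcCStar.ofCarrier x * ConcCStar.ofCarrier y := rfl

def StarRep.map {Q : DiGraph} {C D : ConcCStar} (ψ : StarHom C D) (ρ : StarRep Q C) :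
    StarRep Q D where
  toRep :=
    { v := fun x => ConcCStar.ofCarrier (ψ (ConcCStar.el (ρ.toRep.v x)))
      e := fun x => ConcCStar.ofCarrier (ψ (ConcCStar.el (ρ.toRep.e x)))
      idem := fun x => by
        rw [← ConcCStar.ofCarrier_mul, ← map_mul, ← ConcCStar.el_mul, ρ.toRep.idem]
      selfAdjoint := fun x => congrArg Subtype.val <|
        (show IsSelfAdjoint (ConcCStar.el (ρ.toRep.v x)) from
          Subtype.ext (ρ.toRep.selfAdjoint x)).map ψ
      contractive := fun x =>
        (NonUnitalStarAlgHom.norm_apply_le ψ _).trans (ρ.toRep.contractive x)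
      range_mul := fun x => by
        rw [← ConcCStar.ofCarrier_mul, ← map_mul, ← ConcCStar.el_mul, ρ.toRep.range_mul]
      mul_source := fun x => by
        rw [← ConcCStar.ofCarrier_mul, ← map_mul, ← ConcCStar.el_mul, ρ.toRep.mul_source] }
  star_eq x := by
    show (star (ψ (ConcCStar.el (ρ.toRep.e (Sum.inl x))))).val
      = (ψ (ConcCStar.el (ρ.toRep.e (Sum.inr x)))).val
    rw [← map_star]
    exact congrArg (fun a => (ψ a).val) (Subtype.ext (ρ.star_eq x))

namespace StarRep

variable {Q R : DiGraph} {C D E : ConcCStar}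

theorem ext {σ τ : StarRep Q C} (hv : ∀ x, σ.toRep.v x = τ.toRep.v x)
    (he : ∀ x, σ.toRep.e x = τ.toRep.e x) : σ = τ := by
  obtain ⟨⟨vσ, eσ, _, _, _, _, _⟩, _⟩ := σ
  obtain ⟨⟨vτ, eτ, _, _, _, _, _⟩, _⟩ := τ
  obtain rfl : vσ = vτ := funext hv
  obtain rfl : eσ = eτ := funext he
  rfl

theorem map_comp (ψ : StarHom C D) (φ : StarHom D E) (ρ : StarRep Q C) :
    ρ.map (φ.comp ψ) = (ρ.map ψ).map φ := rfl

theorem pullback_map (k : GraphHom Q R) (φ : StarHom C D) (σ : StarRep R C) :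
    (σ.pullback k).map φ = (σ.map φ).pullback k := rfl

end StarRep

theorem starExtendsRep_iff_map_eq {Q : DiGraph} {C D : ConcCStar} {ψ : StarHom C D}
    {ρ : StarRep Q C} {σ : StarRep Q D} : StarExtendsRep ψ ρ σ ↔ ρ.map ψ = σ := by
  refine ⟨fun h => StarRep.ext (fun x => Subtype.ext (h.1 x)) (fun x => Subtype.ext (h.2 x)),
    ?_⟩
  rintro rfl
  exact ⟨fun _ => rfl, fun _ => rfl⟩

theorem starExtendsAlong_iff_map_eq {Q R : DiGraph} {C D : ConcCStar} {ψ : StarHom C D}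
    {ρ : StarRep Q C} {σ : StarRep R D} {k : GraphHom Q R} :
    StarExtendsAlong ψ ρ σ k ↔ ρ.map ψ = σ.pullback k := by
  rw [← starExtendsRep_iff_map_eq]
  constructor
  · rintro ⟨hv, hl, hr⟩
    exact ⟨hv, by rintro (x | x); exacts [hl x, hr x]⟩
  · rintro ⟨hv, he⟩
    exact ⟨hv, fun x => he (Sum.inl x), fun x => he (Sum.inr x)⟩

theorem IsUniversalGCm.hom_ext {Q : DiGraph} {C D : ConcCStar} {ι : StarRep Q C}
    (hC : IsUniversalGCm Q C ι) {ψ₁ ψ₂ : StarHom C D} (h : ι.map ψ₁ = ι.map ψ₂) : ψ₁ = ψ₂ :=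
  (hC.2 D (ι.map ψ₂)).unique (starExtendsRep_iff_map_eq.2 h) (starExtendsRep_iff_map_eq.2 rfl)

section Glue

variable {ι : Type*} {G : ι → DiGraph} {Q : DiGraph}

def GraphHom.JointlySurjective (k : ∀ i, GraphHom (G i) Q) : Prop :=
  Function.Surjective (fun p : Σ i, (G i).V => (k p.1).vMap p.2) ∧
    Function.Surjective (fun p : Σ i, (G i).E => (k p.1).eMap p.2)

theorem GraphHom.JointlySurjective.doubled {k : ∀ i, GraphHom (G i) Q}
    (hk : GraphHom.JointlySurjective k) : GraphHom.JointlySurjective fun i => (k i).doubled := by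
  refine ⟨hk.1, ?_⟩
  rintro (e | e) <;> obtain ⟨⟨i, x⟩, rfl⟩ := hk.2 e
  exacts [⟨⟨i, Sum.inl x⟩, rfl⟩, ⟨⟨i, Sum.inr x⟩, rfl⟩]

def GraphRep.Compatible {A : OpAlg} (k : ∀ i, GraphHom (G i) Q) (ρ : ∀ i, GraphRep (G i) A) :
    Prop :=
  (∀ i j x y, (k i).vMap x = (k j).vMap y → (ρ i).v x = (ρ j).v y) ∧
    ∀ i j x y, (k i).eMap x = (k j).eMap y → (ρ i).e x = (ρ j).e y

namespace GraphRep

variable {A : OpAlg} {k : ∀ i, GraphHom (G i) Q} {ρ : ∀ i, GraphRep (G i) A}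
  (hk : GraphHom.JointlySurjective k)

def glueV (q : Q.V) : A.carrier :=
  (ρ (hk.1 q).choose.1).v (hk.1 q).choose.2

def glueE (q : Q.E) : A.carrier :=
  (ρ (hk.2 q).choose.1).e (hk.2 q).choose.2

theorem glueV_apply (hc : Compatible k ρ) (i : ι) (x : (G i).V) :
    glueV (ρ := ρ) hk ((k i).vMap x) = (ρ i).v x :=
  hc.1 _ _ _ _ (hk.1 ((k i).vMap x)).choose_spec

theorem glueE_apply (hc : Compatible k ρ) (i : ι) (x : (G i).E) :
    glueE (ρ := ρ) hk ((k i).eMap x) = (ρ i).e x :=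
  hc.2 _ _ _ _ (hk.2 ((k i).eMap x)).choose_spec

/-- Each relation of `Q` involves one edge together with its source and range, so it already
holds in a representation `ρ i` whose graph covers that edge. -/
def glue (hc : Compatible k ρ) : GraphRep Q A where
  v := glueV hk
  e := glueE hk
  idem q := by
    obtain ⟨⟨i, x⟩, rfl⟩ := hk.1 q
    rw [glueV_apply hk hc]
    exact (ρ i).idem x
  selfAdjoint q := by
    obtain ⟨⟨i, x⟩, rfl⟩ := hk.1 q
    rw [glueV_apply hk hc]
    exact (ρ i).selfAdjoint x
  contractive q := by
    obtain ⟨⟨i, x⟩, rfl⟩ := hk.2 q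
    rw [glueE_apply hk hc]
    exact (ρ i).contractive x
  range_mul q := by
    obtain ⟨⟨i, x⟩, rfl⟩ := hk.2 q
    rw [glueE_apply hk hc, (k i).r_eq, glueV_apply hk hc]
    exact (ρ i).range_mul x
  mul_source q := by
    obtain ⟨⟨i, x⟩, rfl⟩ := hk.2 q
    rw [glueE_apply hk hc, (k i).s_eq, glueV_apply hk hc]
    exact (ρ i).mul_source x

end GraphRep

namespace StarRep

variable {C : ConcCStar} {k : ∀ i, GraphHom (G i) Q}

def glue (hk : GraphHom.JointlySurjective k) {σ : ∀ i, StarRep (G i) C}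
    (hc : GraphRep.Compatible (fun i => (k i).doubled) fun i => (σ i).toRep) : StarRep Q C where
  toRep := GraphRep.glue hk.doubled hc
  star_eq q := by
    obtain ⟨⟨i, x⟩, rfl⟩ := hk.2 q
    have hl := GraphRep.glueE_apply hk.doubled hc i (Sum.inl x)
    have hr := GraphRep.glueE_apply hk.doubled hc i (Sum.inr x)
    simp only [GraphRep.glue, GraphHom.doubled, Sum.map_inl, Sum.map_inr] at hl hr ⊢
    rw [hl, hr]
    exact (σ i).star_eq x

theorem glue_pullback (hk : GraphHom.JointlySurjective k) {σ : ∀ i, StarRep (G i) C}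
    (hc : GraphRep.Compatible (fun i => (k i).doubled) fun i => (σ i).toRep) (i : ι) :
    (glue hk hc).pullback (k i) = σ i :=
  ext (GraphRep.glueV_apply hk.doubled hc i) (GraphRep.glueE_apply hk.doubled hc i)

theorem ext_of_pullback (hk : GraphHom.JointlySurjective k) {τ τ' : StarRep Q C}
    (h : ∀ i, τ.pullback (k i) = τ'.pullback (k i)) : τ = τ' := by
  refine ext (fun q => ?_) (fun q => ?_)
  · obtain ⟨⟨i, x⟩, rfl⟩ := hk.1 q
    exact congrArg (fun ρ : StarRep (G i) C => ρ.toRep.v x) (h i)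
  · obtain ⟨⟨i, x⟩, rfl⟩ := hk.doubled.2 q
    exact congrArg (fun ρ : StarRep (G i) C => ρ.toRep.e x) (h i)

end StarRep

end Glue

namespace Subgraph

variable {Q : DiGraph} {C : ConcCStar}

theorem pullback_inclTop_incl {F G : Subgraph Q} (h : F ≤ G) (τ : StarRep Q C) :
    (τ.pullback G.inclTop).pullback (incl h) = τ.pullback F.inclTop :=
  StarRep.ext (fun _ => rfl) (by rintro (_ | _) <;> rfl)

theorem jointlySurjective_inclTop {W : Set (Subgraph Q)} (hV : ⋃ F ∈ W, F.VS = Set.univ)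
    (hE : ⋃ F ∈ W, F.ES = Set.univ) :
    GraphHom.JointlySurjective fun F : W => F.1.inclTop := by
  constructor
  · intro v
    obtain ⟨F, hF, hv⟩ := Set.mem_iUnion₂.1 (hV.symm ▸ Set.mem_univ v)
    exact ⟨⟨⟨F, hF⟩, ⟨v, hv⟩⟩, rfl⟩
  · intro e
    obtain ⟨F, hF, he⟩ := Set.mem_iUnion₂.1 (hE.symm ▸ Set.mem_univ e)
    exact ⟨⟨⟨F, hF⟩, ⟨e, he⟩⟩, rfl⟩

/-- Two members of a directed family meet inside a common member, where both restrict the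
same representation. -/
theorem compatible_of_directedOn {W : Set (Subgraph Q)} (hdir : DirectedOn (· ≤ ·) W)
    {σ : ∀ F : W, StarRep F.1.toGraph C}
    (hσ : ∀ (F G : W) (h : F.1 ≤ G.1), σ F = (σ G).pullback (incl h)) :
    GraphRep.Compatible (fun F : W => F.1.inclTop.doubled) fun F => (σ F).toRep := by
  constructor
  · intro F F' x y hxy
    obtain ⟨K, hK, hFK, hF'K⟩ := hdir F.1 F.2 F'.1 F'.2
    show (σ F).toRep.v x = (σ F').toRep.v y
    rw [hσ F ⟨K, hK⟩ hFK, hσ F' ⟨K, hK⟩ hF'K]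
    exact congrArg (σ ⟨K, hK⟩).toRep.v (Subtype.ext hxy)
  · intro F F' x y hxy
    obtain ⟨K, hK, hFK, hF'K⟩ := hdir F.1 F.2 F'.1 F'.2
    show (σ F).toRep.e x = (σ F').toRep.e y
    rw [hσ F ⟨K, hK⟩ hFK, hσ F' ⟨K, hK⟩ hF'K]
    refine congrArg (σ ⟨K, hK⟩).toRep.e (Sum.map_injective.2
      ⟨Subtype.val_injective, Subtype.val_injective⟩ ?_)
    rcases x with x | x <;> rcases y with y | y <;> exact hxy

end Subgraph

/-- If `W` is a collection of subgraphs of `Q`, directed by inclusion,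
covering the vertices and the edges of `Q`, then `GC*ₘ(Q)` is the inductive limit of the
universal C*-algebras of the members of `W`, with connecting `*`-homomorphisms induced
by the inclusions of subgraphs. -/
theorem universal_graph_CStar_inductive_limit_of_subgraphs
    (Q : DiGraph) (W : Set (Subgraph Q))
    (hdir : DirectedOn (· ≤ ·) W)
    (hV : ⋃ F ∈ W, F.VS = Set.univ) (hE : ⋃ F ∈ W, F.ES = Set.univ)
    (CQ : ConcCStar) (κQ : StarRep Q CQ) (hQ : IsUniversalGCm Q CQ κQ)
    (C : ∀ F : W, ConcCStar) (κ : ∀ F : W, StarRep F.1.toGraph (C F))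
    (hC : ∀ F : W, IsUniversalGCm F.1.toGraph (C F) (κ F))
    (Γ : ∀ F G : W, F.1 ≤ G.1 → StarHom (C F) (C G))
    (hΓ : ∀ (F G : W) (h : F.1 ≤ G.1),
      StarExtendsAlong (Γ F G h) (κ F) (κ G) (Subgraph.incl h))
    (Θ : ∀ F : W, StarHom (C F) CQ)
    (hΘ : ∀ F : W, StarExtendsAlong (Θ F) (κ F) κQ F.1.inclTop) :
    (∀ (F G : W) (h : F.1 ≤ G.1) (x : (C F).carrier),
      Θ G (Γ F G h x) = Θ F x) ∧
    ∀ (B : ConcCStar) (Γ' : ∀ F : W, StarHom (C F) B),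
      (∀ (F G : W) (h : F.1 ≤ G.1) (x : (C F).carrier),
        Γ' G (Γ F G h x) = Γ' F x) →
      ∃! Λ : StarHom CQ B, ∀ (F : W) (x : (C F).carrier),
        Λ (Θ F x) = Γ' F x := by
  have hcov := Subgraph.jointlySurjective_inclTop hV hE
  have hmapΘ : ∀ (D : ConcCStar) (Λ : StarHom CQ D) (F : W),
      (κ F).map (Λ.comp (Θ F)) = (κQ.map Λ).pullback F.1.inclTop := by
    intro D Λ F
    rw [StarRep.map_comp, starExtendsAlong_iff_map_eq.1 (hΘ F), StarRep.pullback_map]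
  refine ⟨fun F G h => DFunLike.ext_iff.1 <|
    (hC F).hom_ext (ψ₁ := (Θ G).comp (Γ F G h)) (ψ₂ := Θ F) ?_, fun B Γ' hΓ' => ?_⟩
  · rw [StarRep.map_comp, starExtendsAlong_iff_map_eq.1 (hΓ F G h), StarRep.pullback_map,
      starExtendsAlong_iff_map_eq.1 (hΘ G), Subgraph.pullback_inclTop_incl,
      starExtendsAlong_iff_map_eq.1 (hΘ F)]
  have hσ : ∀ (F G : W) (h : F.1 ≤ G.1),
      (κ F).map (Γ' F) = ((κ G).map (Γ' G)).pullback (Subgraph.incl h) := by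
    intro F G h
    rw [← NonUnitalStarAlgHom.ext (f := (Γ' G).comp (Γ F G h)) (hΓ' F G h), StarRep.map_comp,
      starExtendsAlong_iff_map_eq.1 (hΓ F G h), StarRep.pullback_map]
  have hcompat := Subgraph.compatible_of_directedOn hdir hσ
  obtain ⟨Λ, hΛ, hΛu⟩ := hQ.2 B (StarRep.glue hcov hcompat)
  refine ⟨Λ, fun F => DFunLike.ext_iff.1 <|
    (hC F).hom_ext (ψ₁ := Λ.comp (Θ F)) (ψ₂ := Γ' F) ?_, fun Λ' hΛ' => hΛu Λ' ?_⟩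
  · rw [hmapΘ, starExtendsRep_iff_map_eq.1 hΛ]
    exact StarRep.glue_pullback hcov hcompat F
  · refine starExtendsRep_iff_map_eq.2 (StarRep.ext_of_pullback hcov fun F => ?_)
    rw [← hmapΘ, NonUnitalStarAlgHom.ext (f := Λ'.comp (Θ F)) (hΛ' F)]
    exact (StarRep.glue_pullback hcov hcompat F).symm

end
end
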